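/- Let u ∈ C²([a,b]) with a < b and m₂ ≤ u''(x) ≤ M₂ for all x ∈ [a,b]. Then for every integer n ≥ 1: ∫_a^b |u'(x) - (u(b) - u(a))/(b - a)| dx ≤ ((b-a)²/2)·‖u''‖_∞ + ((b-a)²/(8n))·(M₂ - m₂), where ‖u''‖_∞ is the supremum of |u''| over [a,b]. -/

import Mathlib

/-!
By the mean value theorem `u'` takes the value `(u b - u a)/(b - a)` at some `ξ ∈ [a,b]`, so
`|u' x - (u b - u a)/(b - a)| ≤ ‖u''‖_∞ |x - ξ|`, and `∫_a^b |x - ξ| dx ≤ (b - a)²/2`.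
The term with `M₂ - m₂` is then only a nonnegative surplus.
-/

open Set intervalIntegral

theorem integral_abs_sub_eq {a b ξ : ℝ} (haξ : a ≤ ξ) (hξb : ξ ≤ b) :
    ∫ x in a..b, |x - ξ| = ((ξ - a) ^ 2 + (b - ξ) ^ 2) / 2 := by
  have hc : Continuous fun x : ℝ => |x - ξ| := by fun_prop
  rw [← integral_add_adjacent_intervals (hc.intervalIntegrable a ξ) (hc.intervalIntegrable ξ b)]
  have left : ∫ x in a..ξ, |x - ξ| = ∫ x in a..ξ, (ξ - x) := by
    refine integral_congr fun x hx => ?_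
    rw [uIcc_of_le haξ] at hx
    simp only [abs_of_nonpos (sub_nonpos.2 hx.2), neg_sub]
  have right : ∫ x in ξ..b, |x - ξ| = ∫ x in ξ..b, (x - ξ) := by
    refine integral_congr fun x hx => ?_
    rw [uIcc_of_le hξb] at hx
    simp only [abs_of_nonneg (sub_nonneg.2 hx.1)]
  rw [left, right, integral_sub intervalIntegrable_const intervalIntegrable_id,
    integral_sub intervalIntegrable_id intervalIntegrable_const]
  simp only [integral_const, integral_id, smul_eq_mul]
  ring

theorem integral_abs_sub_le {a b ξ : ℝ} (hξ : ξ ∈ Icc a b) :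
    ∫ x in a..b, |x - ξ| ≤ (b - a) ^ 2 / 2 := by
  rw [integral_abs_sub_eq hξ.1 hξ.2]
  nlinarith [mul_nonneg (sub_nonneg.2 hξ.1) (sub_nonneg.2 hξ.2)]

theorem integral_abs_sub_le_of_abs_hasDerivWithinAt_le {f f' : ℝ → ℝ} {a b ξ C : ℝ}
    (hf : ∀ x ∈ Icc a b, HasDerivWithinAt f (f' x) (Icc a b) x)
    (bound : ∀ x ∈ Icc a b, |f' x| ≤ C) (hξ : ξ ∈ Icc a b) :
    ∫ x in a..b, |f x - f ξ| ≤ C * ((b - a) ^ 2 / 2) := by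
  have hab : a ≤ b := hξ.1.trans hξ.2
  have hC : 0 ≤ C := (abs_nonneg _).trans (bound ξ hξ)
  have lipschitz : ∀ x ∈ Icc a b, |f x - f ξ| ≤ C * |x - ξ| := fun x hx =>
    (convex_Icc a b).norm_image_sub_le_of_norm_hasDerivWithin_le hf bound hξ hx
  have hfc : ContinuousOn f (Icc a b) := fun x hx => (hf x hx).continuousWithinAt
  calc ∫ x in a..b, |f x - f ξ|
      ≤ ∫ x in a..b, C * |x - ξ| := by
        refine integral_mono_on hab ?_ (Continuous.intervalIntegrable (by fun_prop) a b) lipschitz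
        exact ContinuousOn.intervalIntegrable (by rw [uIcc_of_le hab]; fun_prop)
    _ = C * ∫ x in a..b, |x - ξ| := integral_const_mul C _
    _ ≤ C * ((b - a) ^ 2 / 2) := mul_le_mul_of_nonneg_left (integral_abs_sub_le hξ) hC

theorem abs_le_iSup_abs_of_continuousOn {X : Type*} [TopologicalSpace X] {f : X → ℝ} {s : Set X}
    (hs : IsCompact s) (hf : ContinuousOn f s) {x : X} (hx : x ∈ s) : |f x| ≤ ⨆ t : s, |f t| := by
  refine le_ciSup (f := fun t : s => |f t|) ?_ ⟨x, hx⟩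
  simpa only [image_eq_range] using hs.bddAbove_image hf.abs

/-- Refined per-interval estimate: for `u ∈ C²([a,b])` with `m₂ ≤ u'' ≤ M₂` and every `n ≥ 1`,
`∫_a^b |u'(x) - (u(b)-u(a))/(b-a)| dx ≤ ((b-a)²/2)·‖u''‖_∞ + ((b-a)²/(8n))·(M₂-m₂)`. -/
theorem slope_deviation_L1_refined
    (a b : ℝ) (hab : a < b) (u u' u'' : ℝ → ℝ) (m2 M2 : ℝ)
    (hu' : ∀ x ∈ Icc a b, HasDerivWithinAt u (u' x) (Icc a b) x)
    (hu'' : ∀ x ∈ Icc a b, HasDerivWithinAt u' (u'' x) (Icc a b) x)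
    (hu''cont : ContinuousOn u'' (Icc a b))
    (hm2 : ∀ x ∈ Icc a b, m2 ≤ u'' x)
    (hM2 : ∀ x ∈ Icc a b, u'' x ≤ M2) :
    ∀ n : ℕ, 1 ≤ n →
      ∫ x in a..b, |u' x - (u b - u a) / (b - a)|
        ≤ ((b - a) ^ 2 / 2) * (⨆ t : Icc a b, |u'' t|)
            + ((b - a) ^ 2 / (8 * n)) * (M2 - m2) := by
  intro n _
  have ha : a ∈ Icc a b := left_mem_Icc.2 hab.le
  obtain ⟨ξ, hξ, hslope⟩ := exists_hasDerivAt_eq_slope u u' hab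
    (fun x hx => (hu' x hx).continuousWithinAt)
    (fun x hx => (hu' x (Ioo_subset_Icc_self hx)).hasDerivAt (Icc_mem_nhds hx.1 hx.2))
  have main : ∫ x in a..b, |u' x - (u b - u a) / (b - a)|
      ≤ (⨆ t : Icc a b, |u'' t|) * ((b - a) ^ 2 / 2) := by
    rw [← hslope]
    exact integral_abs_sub_le_of_abs_hasDerivWithinAt_le hu''
      (fun x hx => abs_le_iSup_abs_of_continuousOn isCompact_Icc hu''cont hx)
      (Ioo_subset_Icc_self hξ)
  have remainder_nonneg : 0 ≤ (b - a) ^ 2 / (8 * n) * (M2 - m2) :=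
    mul_nonneg (by positivity) (sub_nonneg.2 ((hm2 a ha).trans (hM2 a ha)))
  linarith
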